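/- Let A be a weighted directed graph on n vertices that is weakly connected with total edge weight W = ∑ i, ∑ j, A i j > 0, and let b be the orthogonal projection of d onto the kernel of L. Then b i ≥ 0 for every vertex i, and the forward democracy coefficient satisfies η_f(A) = (∑ i, b i) / (∑ i, d i). -/

import Mathlib

open Matrix BigOperators

noncomputable section

variable {n : ℕ}

/-- Weighted in-degree vector. -/
def indeg (A : Matrix (Fin n) (Fin n) ℝ) (j : Fin n) : ℝ := ∑ i, A i j

/-- Weighted out-degree vector. -/
def outdeg (A : Matrix (Fin n) (Fin n) ℝ) (i : Fin n) : ℝ := ∑ j, A i j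

/-- Weighted in-degree Laplacian `L = diag d - A`. -/
def inLap (A : Matrix (Fin n) (Fin n) ℝ) : Matrix (Fin n) (Fin n) ℝ :=
  Matrix.diagonal (indeg A) - A

/-- Reachability: reflexive-transitive closure of the edge relation. -/
def Reaches (A : Matrix (Fin n) (Fin n) ℝ) : Fin n → Fin n → Prop :=
  Relation.ReflTransGen fun i j => 0 < A i j

/-- Weak connectivity. -/
def WeaklyConnected (A : Matrix (Fin n) (Fin n) ℝ) : Prop :=
  ∀ i j : Fin n, Relation.ReflTransGen (fun i j => 0 < A i j ∨ 0 < A j i) i j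

/-- Strong connectivity. -/
def StronglyConnected (A : Matrix (Fin n) (Fin n) ℝ) : Prop :=
  ∀ i j : Fin n, Reaches A i j

/-- Simply forward influenced graph. -/
def SimplyForwardInfluenced (A : Matrix (Fin n) (Fin n) ℝ) : Prop :=
  (∃ i, indeg A i = 0) ∧ (∃ i, indeg A i ≠ 0) ∧
    ∀ j, indeg A j ≠ 0 → ∃ i, indeg A i = 0 ∧ Reaches A i j

/-- A set of vertices with no incoming edges from outside. -/
def InClosed (A : Matrix (Fin n) (Fin n) ℝ) (S : Finset (Fin n)) : Prop :=
  ∀ i j : Fin n, i ∉ S → j ∈ S → A i j = 0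

/-- Minimal source subgraph. -/
def MinSourceSubgraph (A : Matrix (Fin n) (Fin n) ℝ) (S : Finset (Fin n)) : Prop :=
  S.Nonempty ∧ InClosed A S ∧ ∀ T ⊆ S, T.Nonempty → T ≠ S → ¬ InClosed A T

/-- Total edge weight. -/
def totalWeight (A : Matrix (Fin n) (Fin n) ℝ) : ℝ := ∑ i, ∑ j, A i j

/-- `g` is a forward hierarchical level vector: a minimizer of `‖Lᵀ x - d‖₂`. -/
def IsFHL (A : Matrix (Fin n) (Fin n) ℝ) (g : Fin n → ℝ) : Prop :=
  ∀ x : Fin n → ℝ,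
    ∑ i, ((inLap A)ᵀ.mulVec g i - indeg A i) ^ 2 ≤
      ∑ i, ((inLap A)ᵀ.mulVec x i - indeg A i) ^ 2

/-- Forward democracy coefficient, computed from a forward hierarchical level vector `g`. -/
def etaF (A : Matrix (Fin n) (Fin n) ℝ) (g : Fin n → ℝ) : ℝ :=
  1 - (∑ i, ∑ j, A i j * (g j - g i)) / totalWeight A

/-- Forward influence centrality of a vertex, from a forward hierarchical level vector `g`. -/
def vF (A : Matrix (Fin n) (Fin n) ℝ) (g : Fin n → ℝ) (i : Fin n) : ℝ :=
  if indeg A i = 0 then 1 else 1 - (∑ k, A k i * (g i - g k)) / indeg A i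

/-- `b` is the orthogonal projection of `d` onto `ker L` (standard Euclidean inner product). -/
def IsProjKerL (A : Matrix (Fin n) (Fin n) ℝ) (b : Fin n → ℝ) : Prop :=
  (inLap A).mulVec b = 0 ∧
    ∀ x : Fin n → ℝ, (inLap A).mulVec x = 0 → ∑ i, (indeg A i - b i) * x i = 0

/-! `ker L` is closed under taking positive parts: if `Lx = 0` then every entry of `L x⁺` is
`≤ 0`, while the entries of any `L y` sum to zero since the columns of `L` do. So the negative part
`z` of `b` lies in `ker L`, and `0 = ⟪d - b, z⟫ ≥ ⟪z, z⟫` because `d ≥ 0`; hence `b ≥ 0`.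
The normal equations of the least-squares problem say `L (Lᵀ g - d) = 0`, and `d - (d - Lᵀ g)`
lies in `range Lᵀ ⊥ ker L`, so `b = d - Lᵀ g`. Summing, `∑ b = W - ∑ A i j (g j - g i)`. -/

theorem Matrix.transpose_mulVec_sub_eq_zero_of_forall_sum_sq_le {m k : Type*} [Fintype m]
    [Fintype k] (M : Matrix m k ℝ) (d : m → ℝ) {g : k → ℝ}
    (hg : ∀ x, ∑ i, (M *ᵥ g - d) i ^ 2 ≤ ∑ i, (M *ᵥ x - d) i ^ 2) :
    Mᵀ *ᵥ (M *ᵥ g - d) = 0 := by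
  set r := M *ᵥ g - d
  have horth : ∀ v, r ⬝ᵥ M *ᵥ v = 0 := by
    intro v
    set w := M *ᵥ v
    have hquad : ∀ t : ℝ, 0 ≤ (w ⬝ᵥ w) * (t * t) + 2 * (r ⬝ᵥ w) * t + 0 := by
      intro t
      have hshift : M *ᵥ (g + t • v) - d = r + t • w := by
        simp only [r, w, mulVec_add, mulVec_smul]; abel
      have hexpand : ∑ i, (r + t • w) i ^ 2
          = ∑ i, r i ^ 2 + ((w ⬝ᵥ w) * (t * t) + 2 * (r ⬝ᵥ w) * t) := by
        simp only [dotProduct, Pi.add_apply, Pi.smul_apply, smul_eq_mul, Finset.mul_sum,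
          Finset.sum_mul, ← Finset.sum_add_distrib]
        exact Finset.sum_congr rfl fun i _ => by ring
      have hmin := hg (g + t • v)
      rw [hshift, hexpand] at hmin
      linarith
    -- `t ↦ ‖r + t w‖²` is minimal at `t = 0`, so its discriminant `(2 ⟪r, w⟫)²` is `≤ 0`
    have hdisc := discrim_le_zero hquad
    rw [discrim] at hdisc
    nlinarith [sq_nonneg (r ⬝ᵥ w)]
  have hself := horth (Mᵀ *ᵥ r)
  rw [dotProduct_mulVec, ← mulVec_transpose] at hself
  exact dotProduct_self_eq_zero.mp hself

lemma mulVec_inLap_apply (A : Matrix (Fin n) (Fin n) ℝ) (x : Fin n → ℝ) (i : Fin n) :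
    (inLap A *ᵥ x) i = indeg A i * x i - ∑ j, A i j * x j := by
  rw [inLap, sub_mulVec, Pi.sub_apply, mulVec_diagonal]
  rfl

lemma transpose_inLap_mulVec_apply (A : Matrix (Fin n) (Fin n) ℝ) (x : Fin n → ℝ) (i : Fin n) :
    ((inLap A)ᵀ *ᵥ x) i = ∑ j, A j i * (x i - x j) := by
  rw [inLap, transpose_sub, diagonal_transpose, sub_mulVec, Pi.sub_apply, mulVec_diagonal,
    mulVec_transpose, indeg, Finset.sum_mul]
  simp only [vecMul, dotProduct, mul_sub, Finset.sum_sub_distrib, mul_comm]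

lemma sum_mulVec_inLap (A : Matrix (Fin n) (Fin n) ℝ) (x : Fin n → ℝ) :
    ∑ i, (inLap A *ᵥ x) i = 0 := by
  have hcol : (inLap A)ᵀ *ᵥ 1 = 0 := by
    ext i; simp [transpose_inLap_mulVec_apply]
  rw [← one_dotProduct, dotProduct_mulVec, ← mulVec_transpose, hcol, zero_dotProduct]

lemma sum_transpose_inLap_mulVec (A : Matrix (Fin n) (Fin n) ℝ) (x : Fin n → ℝ) :
    ∑ i, ((inLap A)ᵀ *ᵥ x) i = ∑ i, ∑ j, A i j * (x j - x i) := by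
  simp only [transpose_inLap_mulVec_apply]
  exact Finset.sum_comm

lemma sum_indeg (A : Matrix (Fin n) (Fin n) ℝ) : ∑ i, indeg A i = totalWeight A :=
  Finset.sum_comm

lemma indeg_nonneg {A : Matrix (Fin n) (Fin n) ℝ} (hA : ∀ i j, 0 ≤ A i j) (j : Fin n) :
    0 ≤ indeg A j :=
  Finset.sum_nonneg fun i _ => hA i j

lemma inLap_mulVec_max_zero_eq_zero {A : Matrix (Fin n) (Fin n) ℝ} (hA : ∀ i j, 0 ≤ A i j)
    {x : Fin n → ℝ} (hx : inLap A *ᵥ x = 0) : inLap A *ᵥ (fun i => max (x i) 0) = 0 := by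
  have hle : ∀ i, (inLap A *ᵥ fun i => max (x i) 0) i ≤ 0 := by
    intro i
    have hxi : indeg A i * x i = ∑ j, A i j * x j := by
      simpa [mulVec_inLap_apply, sub_eq_zero] using congrFun hx i
    have hlow : max (∑ j, A i j * x j) 0 ≤ ∑ j, A i j * max (x j) 0 :=
      max_le (Finset.sum_le_sum fun j _ => mul_le_mul_of_nonneg_left (le_max_left _ _) (hA i j))
        (Finset.sum_nonneg fun j _ => mul_nonneg (hA i j) (le_max_right _ _))
    rw [mulVec_inLap_apply, mul_max_of_nonneg _ _ (indeg_nonneg hA i), mul_zero, hxi]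
    linarith
  funext i
  exact (Finset.sum_eq_zero_iff_of_nonpos fun i _ => hle i).mp (sum_mulVec_inLap A _) i
    (Finset.mem_univ i)

namespace IsProjKerL

variable {A : Matrix (Fin n) (Fin n) ℝ} {b : Fin n → ℝ}

theorem dotProduct_eq_zero (hb : IsProjKerL A b) {x : Fin n → ℝ} (hx : inLap A *ᵥ x = 0) :
    (indeg A - b) ⬝ᵥ x = 0 :=
  hb.2 x hx

theorem nonneg (hA : ∀ i j, 0 ≤ A i j) (hb : IsProjKerL A b) (i : Fin n) : 0 ≤ b i := by
  set z : Fin n → ℝ := fun j => max (-b j) 0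
  have hneg : inLap A *ᵥ (-b) = 0 := by rw [mulVec_neg, hb.1, neg_zero]
  have hz : inLap A *ᵥ z = 0 := inLap_mulVec_max_zero_eq_zero hA hneg
  have hle : ∀ j, z j * z j ≤ (indeg A j - b j) * z j := fun j => by
    have := indeg_nonneg hA j
    rcases le_total (-b j) 0 with h | h
    · simp [z, max_eq_right h]
    · simp only [z, max_eq_left h]; nlinarith
  have hzz : z ⬝ᵥ z = 0 :=
    le_antisymm ((Finset.sum_le_sum fun j _ => hle j).trans_eq (hb.dotProduct_eq_zero hz))
      (Finset.sum_nonneg fun j _ => mul_self_nonneg (z j))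
  simpa [z] using congrFun (dotProduct_self_eq_zero.mp hzz) i

theorem unique {c : Fin n → ℝ} (hb : IsProjKerL A b) (hc : IsProjKerL A c) : b = c := by
  have hker : inLap A *ᵥ (b - c) = 0 := by rw [mulVec_sub, hb.1, hc.1, sub_self]
  have hself : (b - c) ⬝ᵥ (b - c) = 0 := calc
    (b - c) ⬝ᵥ (b - c) = ((indeg A - c) - (indeg A - b)) ⬝ᵥ (b - c) := by congr 1; abel
    _ = 0 := by
      rw [sub_dotProduct, hc.dotProduct_eq_zero hker, hb.dotProduct_eq_zero hker, sub_zero]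
  exact sub_eq_zero.mp (dotProduct_self_eq_zero.mp hself)

end IsProjKerL

theorem isProjKerL_indeg_sub_of_isFHL {A : Matrix (Fin n) (Fin n) ℝ} {g : Fin n → ℝ}
    (hg : IsFHL A g) : IsProjKerL A (indeg A - (inLap A)ᵀ *ᵥ g) := by
  have hnormal := (inLap A)ᵀ.transpose_mulVec_sub_eq_zero_of_forall_sum_sq_le (indeg A) hg
  rw [transpose_transpose] at hnormal
  refine ⟨by rw [← neg_sub, mulVec_neg, hnormal, neg_zero], fun x hx => ?_⟩
  change (indeg A - (indeg A - (inLap A)ᵀ *ᵥ g)) ⬝ᵥ x = 0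
  rw [sub_sub_cancel, mulVec_transpose, ← dotProduct_mulVec, hx, dotProduct_zero]

theorem stmt_11_general (A : Matrix (Fin n) (Fin n) ℝ)
    (hA : ∀ i j, 0 ≤ A i j) (hW : 0 < totalWeight A)
    (g : Fin n → ℝ) (hg : IsFHL A g)
    (b : Fin n → ℝ) (hb : IsProjKerL A b) :
    (∀ i, 0 ≤ b i) ∧ etaF A g = (∑ i, b i) / (∑ i, indeg A i) := by
  refine ⟨hb.nonneg hA, ?_⟩
  have hsum : ∑ i, b i = totalWeight A - ∑ i, ∑ j, A i j * (g j - g i) := by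
    rw [hb.unique (isProjKerL_indeg_sub_of_isFHL hg)]
    simp only [Pi.sub_apply]
    rw [Finset.sum_sub_distrib, sum_indeg, sum_transpose_inLap_mulVec]
  rw [etaF, sum_indeg, hsum]
  field_simp

theorem stmt_11 (hn : 0 < n) (A : Matrix (Fin n) (Fin n) ℝ)
    (hA : ∀ i j, 0 ≤ A i j) (hdiag : ∀ i, A i i = 0)
    (hwc : WeaklyConnected A) (hW : 0 < totalWeight A)
    (g : Fin n → ℝ) (hg : IsFHL A g)
    (b : Fin n → ℝ) (hb : IsProjKerL A b) :
    (∀ i, 0 ≤ b i) ∧ etaF A g = (∑ i, b i) / (∑ i, indeg A i) :=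
  stmt_11_general A hA hW g hg b hb
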